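/- arXiv:2312.12741 — 4 statements merged into one kernel-verified Lean document; each statement's English description precedes it below -/
import Mathlib

section
/- Let (Ω, 𝓕, P) be a probability space and 𝓖 ⊆ 𝓕 a sub-σ-algebra. Let B ∈ 𝓕 be an event, Y : Ω → ℝ integrable with mean μ = E[Y] and with σ(Y) independent of the σ-algebra generated by 𝓖 and B. Let ŵ be a 𝓖-measurable random variable with c ≤ ŵ ≤ 1 for a constant c > 0 and E[𝟙_B | 𝓖] = ŵ almost surely, and let m̂ be a bounded 𝓖-measurable random variable. Then E[ 𝟙_B(Y − m̂)/ŵ + m̂ | 𝓖 ] = μ almost surely. -/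
open MeasureTheory ProbabilityTheory

/-- Conditional unbiasedness of the AIPW score: if `Y` is integrable with mean `μY`,
`σ(Y)` is independent of the σ-algebra generated by `m` and `B`, `w` is an
`m`-measurable sampling probability with `c ≤ w ≤ 1`, `c > 0`,
`E[𝟙_B | m] = w` a.s., and `mhat` is a bounded `m`-measurable random variable, then
`E[ 𝟙_B (Y − mhat) / w + mhat | m ] = μY` almost surely. -/
theorem stmt1 {Ω : Type*} (m : MeasurableSpace Ω) [m0 : MeasurableSpace Ω] (μ : Measure Ω) [IsProbabilityMeasure μ]
    (hm : m ≤ m0)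
    (B : Set Ω) (hB : MeasurableSet B)
    (Y : Ω → ℝ) (hYmeas : Measurable Y) (hYint : Integrable Y μ)
    (μY : ℝ) (hμY : ∫ x, Y x ∂μ = μY)
    (hindep : Indep (MeasurableSpace.comap Y inferInstance)
      (m ⊔ MeasurableSpace.generateFrom {B}) μ)
    (w : Ω → ℝ) (hw_meas : Measurable[m] w)
    (c : ℝ) (hc : 0 < c) (hw_bdd : ∀ ω, c ≤ w ω ∧ w ω ≤ 1)
    (hw : μ[B.indicator (fun _ => (1 : ℝ)) | m] =ᵐ[μ] w)
    (mhat : Ω → ℝ) (hmhat_meas : Measurable[m] mhat)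
    (C : ℝ) (hmhat_bdd : ∀ ω, |mhat ω| ≤ C) :
    μ[fun ω => B.indicator (fun _ => (1 : ℝ)) ω * (Y ω - mhat ω) / w ω + mhat ω | m]
      =ᵐ[μ] fun _ => μY := by
  letI : MeasurableSpace Ω := m0
  have hB0 : MeasurableSet[m0] B := hB
  have hYmeas0 : Measurable[m0] Y := hYmeas
  have hw_pos : ∀ ω, 0 < w ω := fun ω => lt_of_lt_of_le hc (hw_bdd ω).1
  have hw_ne : ∀ ω, w ω ≠ 0 := fun ω => (hw_pos ω).ne'
  have hw_m0 : Measurable[m0] w := hw_meas.mono hm le_rfl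
  have hmhat_m0 : Measurable[m0] mhat := hmhat_meas.mono hm le_rfl
  have hind_abs : ∀ ω, |B.indicator (fun _ => (1:ℝ)) ω| ≤ 1 := by
    intro ω; by_cases hω : ω ∈ B <;> simp [Set.indicator, hω]
  have hind_meas : Measurable[m0] (B.indicator (fun _ => (1:ℝ))) :=
    measurable_const.indicator hB0
  have hBind_int : Integrable (B.indicator (fun _ => (1:ℝ))) μ :=
    (integrable_const (1:ℝ)).indicator hB0
  have hmhat_int : Integrable mhat μ :=
    (integrable_const C).mono' hmhat_m0.aestronglyMeasurable (ae_of_all _ hmhat_bdd)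
  haveI : SigmaFinite (μ.trim hm) := by
    have : IsFiniteMeasure (μ.trim hm) := isFiniteMeasure_trim hm
    infer_instance
  -- the key lemma: integrating an m-measurable bounded function against 1_B is the same
  -- as integrating it against w
  have key : ∀ (h : Ω → ℝ), Measurable[m] h → ∀ D : ℝ, (∀ ω, |h ω| ≤ D) →
      ∫ ω, h ω * B.indicator (fun _ => (1:ℝ)) ω ∂μ = ∫ ω, h ω * w ω ∂μ := by
    intro h hh D hD
    have hh0 : Measurable[m0] h := hh.mono hm le_rfl
    have hint : Integrable (h * B.indicator (fun _ => (1:ℝ))) μ := by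
      refine (integrable_const D).mono' (hh0.mul hind_meas).aestronglyMeasurable
        (ae_of_all _ fun ω => ?_)
      have h1 : |h ω * B.indicator (fun _ => (1:ℝ)) ω| = |h ω| * |B.indicator (fun _ => (1:ℝ)) ω| :=
        abs_mul _ _
      have h2 : |h ω| * |B.indicator (fun _ => (1:ℝ)) ω| ≤ D * 1 := by
        apply mul_le_mul (hD ω) (hind_abs ω) (abs_nonneg _)
        exact le_trans (abs_nonneg _) (hD ω)
      simpa [Real.norm_eq_abs, h1] using h2.trans_eq (mul_one D)
    have hcx := condExp_mul_of_stronglyMeasurable_left (μ := μ) hh.stronglyMeasurable hint hBind_int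
    calc ∫ ω, h ω * B.indicator (fun _ => (1:ℝ)) ω ∂μ
        = ∫ ω, (μ[h * B.indicator (fun _ => (1:ℝ))|m]) ω ∂μ := (integral_condExp hm).symm
      _ = ∫ ω, (h * μ[B.indicator (fun _ => (1:ℝ))|m]) ω ∂μ := integral_congr_ae hcx
      _ = ∫ ω, h ω * w ω ∂μ := by
          refine integral_congr_ae (hw.mono fun ω hω => ?_)
          simp only [Pi.mul_apply, hω]
  -- integrability of the AIPW score
  have hf_meas : Measurable[m0] (fun ω =>
      B.indicator (fun _ => (1:ℝ)) ω * (Y ω - mhat ω) / w ω + mhat ω) :=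
    (((hind_meas.mul (hYmeas0.sub hmhat_m0)).div hw_m0).add hmhat_m0)
  have hf_int : Integrable (fun ω =>
      B.indicator (fun _ => (1:ℝ)) ω * (Y ω - mhat ω) / w ω + mhat ω) μ := by
    have hdom : Integrable (fun ω => (|Y ω| + C) / c + C) μ := by
      exact ((hYint.abs.add (integrable_const C)).div_const c).add (integrable_const C)
    refine hdom.mono' hf_meas.aestronglyMeasurable (ae_of_all _ fun ω => ?_)
    have h1 : |B.indicator (fun _ => (1:ℝ)) ω * (Y ω - mhat ω) / w ω| ≤ (|Y ω| + C) / c := by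
      rw [abs_div, abs_mul, abs_of_pos (hw_pos ω)]
      have hC0 : (0:ℝ) ≤ C := le_trans (abs_nonneg _) (hmhat_bdd ω)
      apply div_le_div₀ (by positivity) ?_ hc (hw_bdd ω).1
      calc |B.indicator (fun _ => (1:ℝ)) ω| * |Y ω - mhat ω| ≤ 1 * |Y ω - mhat ω| :=
            mul_le_mul_of_nonneg_right (hind_abs ω) (abs_nonneg _)
        _ = |Y ω - mhat ω| := one_mul _
        _ ≤ |Y ω| + |mhat ω| := abs_sub _ _
        _ ≤ |Y ω| + C := by linarith [hmhat_bdd ω]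
    calc ‖B.indicator (fun _ => (1:ℝ)) ω * (Y ω - mhat ω) / w ω + mhat ω‖
        ≤ |B.indicator (fun _ => (1:ℝ)) ω * (Y ω - mhat ω) / w ω| + |mhat ω| := abs_add_le _ _
      _ ≤ (|Y ω| + C) / c + C := add_le_add h1 (hmhat_bdd ω)
  -- apply the characterization of conditional expectation
  refine (ae_eq_condExp_of_forall_setIntegral_eq hm hf_int
    (fun s _ _ => (integrableOn_const (lt_top_iff_ne_top.1 ?_)))
    (fun s hs _ => ?_) stronglyMeasurable_const.aestronglyMeasurable).symm
  · exact (measure_lt_top μ s)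
  · -- compute the set integral of the AIPW score
    have hsm0 : MeasurableSet[m0] s := hm s hs
    have hs_ind : Measurable[m] (s.indicator (fun _ => (1:ℝ))) := measurable_const.indicator hs
    have hs_ind0 : Measurable[m0] (s.indicator (fun _ => (1:ℝ))) :=
      measurable_const.indicator hsm0
    have hs_abs : ∀ ω, |s.indicator (fun _ => (1:ℝ)) ω| ≤ 1 := by
      intro ω; by_cases hω : ω ∈ s <;> simp [Set.indicator, hω]
    set Z : Ω → ℝ := fun ω => s.indicator (fun _ => (1:ℝ)) ω / w ω * B.indicator (fun _ => (1:ℝ)) ω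
      with hZdef
    have hZ_bdd : ∀ ω, |Z ω| ≤ 1 / c := by
      intro ω
      rw [hZdef, abs_mul, abs_div, abs_of_pos (hw_pos ω)]
      calc |s.indicator (fun _ => (1:ℝ)) ω| / w ω * |B.indicator (fun _ => (1:ℝ)) ω|
          ≤ 1 / c * 1 := by
            apply mul_le_mul ?_ (hind_abs ω) (abs_nonneg _) (by positivity)
            exact div_le_div₀ (zero_le_one) (hs_abs ω) hc (hw_bdd ω).1
        _ = 1 / c := mul_one _
    have hZ_meas : Measurable[m0] Z :=
      ((hs_ind0.div hw_m0).mul hind_meas)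
    -- independence of Y and Z
    have hZ_meas_sup : Measurable[m ⊔ MeasurableSpace.generateFrom {B}] Z := by
      have h1 : Measurable[m ⊔ MeasurableSpace.generateFrom {B}]
          (fun ω => s.indicator (fun _ => (1:ℝ)) ω / w ω) :=
        ((hs_ind.div hw_meas).mono le_sup_left le_rfl)
      have hBset : MeasurableSet[MeasurableSpace.generateFrom {B}] B :=
        MeasurableSpace.measurableSet_generateFrom rfl
      have h2 : Measurable[m ⊔ MeasurableSpace.generateFrom {B}]
          (B.indicator (fun _ => (1:ℝ))) :=
        ((measurable_const.indicator hBset).mono le_sup_right le_rfl)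
      exact h1.mul h2
    have hYZ : IndepFun Y Z μ := by
      rw [IndepFun_iff_Indep]
      exact indep_of_indep_of_le_right hindep (measurable_iff_comap_le.mp hZ_meas_sup)
    -- integrability of the pieces
    have hYZ_int : Integrable (fun ω => Y ω * Z ω) μ := by
      have := hYint.bdd_mul (f := Z) hZ_meas.aestronglyMeasurable
        (c := 1/c) (ae_of_all _ fun ω => by simpa [Real.norm_eq_abs] using hZ_bdd ω)
      exact this.congr (ae_of_all _ fun ω => mul_comm _ _)
    have hmZ_int : Integrable (fun ω => mhat ω * Z ω) μ := by
      refine (integrable_const (C * (1/c))).mono'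
        ((hmhat_m0.mul hZ_meas).aestronglyMeasurable) (ae_of_all _ fun ω => ?_)
      have : |mhat ω * Z ω| ≤ C * (1/c) := by
        rw [abs_mul]
        exact mul_le_mul (hmhat_bdd ω) (hZ_bdd ω) (abs_nonneg _)
          (le_trans (abs_nonneg _) (hmhat_bdd ω))
      simpa [Real.norm_eq_abs, abs_mul] using this
    have hsm_int : Integrable (fun ω => s.indicator (fun _ => (1:ℝ)) ω * mhat ω) μ :=
      hmhat_int.bdd_mul hs_ind0.aestronglyMeasurable
        (c := 1) (ae_of_all _ fun ω => by simpa [Real.norm_eq_abs] using hs_abs ω)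
    -- compute ∫ Z
    have hZ_int_val : ∫ ω, Z ω ∂μ = (μ s).toReal := by
      have hkey := key (fun ω => s.indicator (fun _ => (1:ℝ)) ω / w ω) (hs_ind.div hw_meas)
        (1/c) (fun ω => by
          rw [abs_div, abs_of_pos (hw_pos ω)]
          exact div_le_div₀ (zero_le_one) (hs_abs ω) hc (hw_bdd ω).1)
      rw [hZdef]
      rw [hkey]
      have hcan : ∀ ω, s.indicator (fun _ => (1:ℝ)) ω / w ω * w ω
          = s.indicator (fun _ => (1:ℝ)) ω :=
        fun ω => div_mul_cancel₀ _ (hw_ne ω)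
      simp_rw [hcan]
      rw [integral_indicator hsm0]
      simp [measureReal_def]
    -- compute ∫ mhat·Z
    have hmZ_val : ∫ ω, mhat ω * Z ω ∂μ = ∫ ω, s.indicator (fun _ => (1:ℝ)) ω * mhat ω ∂μ := by
      have hmeq : ∀ ω, mhat ω * Z ω =
          (fun ω => mhat ω * s.indicator (fun _ => (1:ℝ)) ω / w ω) ω
            * B.indicator (fun _ => (1:ℝ)) ω := by
        intro ω; rw [hZdef]; ring
      simp_rw [hmeq]
      rw [key (fun ω => mhat ω * s.indicator (fun _ => (1:ℝ)) ω / w ω)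
        ((hmhat_meas.mul hs_ind).div hw_meas) (C * (1/c)) (fun ω => by
          rw [abs_div, abs_mul, abs_of_pos (hw_pos ω)]
          have h1 : |mhat ω| * |s.indicator (fun _ => (1:ℝ)) ω| ≤ C * 1 :=
            mul_le_mul (hmhat_bdd ω) (hs_abs ω) (abs_nonneg _)
              (le_trans (abs_nonneg _) (hmhat_bdd ω))
          have hC0 : (0:ℝ) ≤ C := le_trans (abs_nonneg _) (hmhat_bdd ω)
          calc |mhat ω| * |s.indicator (fun _ => (1:ℝ)) ω| / w ω ≤ (C * 1) / c :=
                div_le_div₀ (by positivity) h1 hc (hw_bdd ω).1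
            _ = C * (1/c) := by ring)]
      refine integral_congr_ae (ae_of_all _ fun ω => ?_)
      show mhat ω * s.indicator (fun _ => (1:ℝ)) ω / w ω * w ω
        = s.indicator (fun _ => (1:ℝ)) ω * mhat ω
      rw [div_mul_cancel₀ _ (hw_ne ω)]
      ring
    -- put everything together
    have hsplit : ∀ ω, s.indicator (fun ω =>
        B.indicator (fun _ => (1:ℝ)) ω * (Y ω - mhat ω) / w ω + mhat ω) ω
        = Y ω * Z ω - mhat ω * Z ω + s.indicator (fun _ => (1:ℝ)) ω * mhat ω := by
      intro ω
      by_cases hω : ω ∈ s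
      · simp only [Set.indicator_of_mem hω, hZdef]
        field_simp
      · simp [Set.indicator_of_notMem hω, hZdef]
    rw [setIntegral_const, ← integral_indicator hsm0]
    simp_rw [hsplit]
    have hsub : Integrable (fun ω => Y ω * Z ω - mhat ω * Z ω) μ := hYZ_int.sub hmZ_int
    rw [integral_add hsub hsm_int, integral_sub hYZ_int hmZ_int,
      hYZ.integral_fun_mul_eq_mul_integral hYint.aestronglyMeasurable hZ_meas.aestronglyMeasurable,
      hμY, hZ_int_val, hmZ_val, smul_eq_mul, measureReal_def]
    ring
end

section
/- Let (Ω, 𝓕, P) be a probability space, 𝓖 ⊆ 𝓕 a sub-σ-algebra, B ∈ 𝓕 an event, and Y : Ω → ℝ square-integrable with mean μ and variance σ², with σ(Y) independent of the σ-algebra generated by 𝓖 and B. Let ŵ be 𝓖-measurable with c ≤ ŵ ≤ 1 for a constant c > 0 and E[𝟙_B | 𝓖] = ŵ almost surely, and let m̂ be a bounded 𝓖-measurable random variable. Then E[ 𝟙_B (Y − m̂)² / ŵ² | 𝓖 ] = (σ² + (μ − m̂)²) / ŵ almost surely. -/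
open MeasureTheory ProbabilityTheory

/-- Single-arm conditional second-moment identity for the AIPW score:
`E[𝟙_B (Y − mhat)² / w² | m] = (σ² + (μY − mhat)²) / w` almost surely. -/
theorem stmt3 {Ω : Type*} (m : MeasurableSpace Ω) [m0 : MeasurableSpace Ω] (μ : Measure Ω) [IsProbabilityMeasure μ]
    (hm : m ≤ m0)
    (B : Set Ω) (hB : MeasurableSet B)
    (Y : Ω → ℝ) (hYmeas : Measurable Y) (hY_sq : MemLp Y 2 μ)
    (μY σ2 : ℝ) (hμY : ∫ x, Y x ∂μ = μY) (hσ2 : ∫ x, (Y x - μY) ^ 2 ∂μ = σ2)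
    (hindep : Indep (MeasurableSpace.comap Y inferInstance)
      (m ⊔ MeasurableSpace.generateFrom {B}) μ)
    (w : Ω → ℝ) (hw_meas : Measurable[m] w)
    (c : ℝ) (hc : 0 < c) (hw_bdd : ∀ ω, c ≤ w ω ∧ w ω ≤ 1)
    (hw : μ[B.indicator (fun _ => (1 : ℝ)) | m] =ᵐ[μ] w)
    (mhat : Ω → ℝ) (hmhat_meas : Measurable[m] mhat)
    (C : ℝ) (hmhat_bdd : ∀ ω, |mhat ω| ≤ C) :
    μ[fun ω => B.indicator (fun _ => (1 : ℝ)) ω * (Y ω - mhat ω) ^ 2 / (w ω) ^ 2 | m]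
      =ᵐ[μ] fun ω => (σ2 + (μY - mhat ω) ^ 2) / w ω := by
  classical
  have hB0 : MeasurableSet[m0] B := hB
  have hYmeas0 : Measurable[m0] Y := hYmeas
  set I : Ω → ℝ := B.indicator (fun _ => (1 : ℝ)) with hIdef
  set m' : MeasurableSpace Ω := m ⊔ MeasurableSpace.generateFrom {B} with hm'def
  have hmm' : m ≤ m' := le_sup_left
  have hgen : MeasurableSpace.generateFrom {B} ≤ m0 := by
    refine MeasurableSpace.generateFrom_le ?_
    rintro t ht
    rw [Set.mem_singleton_iff] at ht
    subst ht
    exact hB0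
  have hm'0 : m' ≤ m0 := sup_le hm hgen
  have hBm' : MeasurableSet[m'] B :=
    (le_sup_right : MeasurableSpace.generateFrom {B} ≤ m') _
      (MeasurableSpace.measurableSet_generateFrom rfl)
  have hIsm' : StronglyMeasurable[m'] I :=
    (stronglyMeasurable_const.indicator hBm')
  have hIbd : ∀ ω, ‖I ω‖ ≤ 1 := by
    intro ω
    by_cases hω : ω ∈ B <;> simp [hIdef, Set.indicator, hω]
  have hYint : Integrable Y μ := hY_sq.integrable one_le_two
  have hY2int : Integrable (fun ω => Y ω ^ 2) μ := by
    simpa [sq] using hY_sq.integrable_sq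
  have hcomap_le : MeasurableSpace.comap Y inferInstance ≤ m0 :=
    measurable_iff_comap_le.mp hYmeas0
  have hYcomap : Measurable[MeasurableSpace.comap Y inferInstance] Y :=
    measurable_iff_comap_le.mpr le_rfl
  have hwpos : ∀ ω, 0 < w ω := fun ω => lt_of_lt_of_le hc (hw_bdd ω).1
  have hwne : ∀ ω, w ω ≠ 0 := fun ω => (hwpos ω).ne'
  -- key lemma: E[I * g | m] = (∫ g) * w  for g measurable wrt σ(Y) and integrable
  have key : ∀ g : Ω → ℝ,
      StronglyMeasurable[MeasurableSpace.comap Y inferInstance] g → Integrable g μ →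
      μ[fun ω => I ω * g ω | m] =ᵐ[μ] fun ω => (∫ x, g x ∂μ) * w ω := by
    intro g hgm hgint
    have hIg : Integrable (fun ω => I ω * g ω) μ :=
      hgint.bdd_mul ((hIsm'.mono hm'0).aestronglyMeasurable)
        (Filter.Eventually.of_forall hIbd)
    have h1 : μ[fun ω => I ω * g ω | m'] =ᵐ[μ] fun ω => I ω * (∫ x, g x ∂μ) := by
      have hmul : μ[I * g | m'] =ᵐ[μ] I * μ[g | m'] :=
        condExp_mul_of_stronglyMeasurable_left hIsm' hIg hgint
      have hind : μ[g | m'] =ᵐ[μ] fun _ => ∫ x, g x ∂μ :=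
        condExp_indep_eq hcomap_le hm'0 hgm hindep
      refine hmul.trans ?_
      filter_upwards [hind] with ω hω
      simp [hω]
    calc μ[fun ω => I ω * g ω | m]
        =ᵐ[μ] μ[μ[fun ω => I ω * g ω | m'] | m] := (condExp_condExp_of_le hmm' hm'0).symm
      _ =ᵐ[μ] μ[fun ω => I ω * (∫ x, g x ∂μ) | m] := condExp_congr_ae h1
      _ =ᵐ[μ] μ[(∫ x, g x ∂μ) • I | m] := by
          refine condExp_congr_ae (Filter.Eventually.of_forall fun ω => ?_)
          simp [mul_comm]
      _ =ᵐ[μ] (∫ x, g x ∂μ) • μ[I | m] := condExp_smul (∫ x, g x ∂μ) I m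
      _ =ᵐ[μ] fun ω => (∫ x, g x ∂μ) * w ω := by
          filter_upwards [hw] with ω hω
          simp only [Pi.smul_apply, smul_eq_mul, hω]
  -- the three conditional moments
  have hYsm : StronglyMeasurable[MeasurableSpace.comap Y inferInstance] Y :=
    hYcomap.stronglyMeasurable
  have hY2sm : StronglyMeasurable[MeasurableSpace.comap Y inferInstance] (fun ω => Y ω ^ 2) :=
    (hYcomap.pow_const 2).stronglyMeasurable
  have key1 := key Y hYsm hYint
  have key2 := key (fun ω => Y ω ^ 2) hY2sm hY2int
  -- E[Y^2] = σ2 + μY^2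
  have hEY2 : ∫ x, Y x ^ 2 ∂μ = σ2 + μY ^ 2 := by
    have hexp : (fun x => (Y x - μY) ^ 2) = fun x => Y x ^ 2 - (2 * μY) * Y x + μY ^ 2 := by
      funext x; ring
    have h1 : Integrable (fun x => Y x ^ 2 - (2 * μY) * Y x) μ :=
      hY2int.sub (hYint.const_mul _)
    have h2 : ∫ x, (Y x - μY) ^ 2 ∂μ
        = (∫ x, (Y x ^ 2 - (2 * μY) * Y x) ∂μ) + ∫ _x, (μY ^ 2 : ℝ) ∂μ := by
      rw [hexp, integral_add h1 (integrable_const _)]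
    have h3 : ∫ x, (Y x ^ 2 - (2 * μY) * Y x) ∂μ
        = (∫ x, Y x ^ 2 ∂μ) - 2 * μY * ∫ x, Y x ∂μ := by
      rw [integral_sub hY2int (hYint.const_mul _), integral_const_mul]
    have h4 : ∫ _x, (μY ^ 2 : ℝ) ∂μ = μY ^ 2 := by simp
    rw [h2, h3, h4, hμY] at hσ2
    linarith
  -- bounded m-measurable coefficients
  have ha1 : Measurable[m] fun ω => 1 / w ω ^ 2 :=
    (measurable_const.div ((hw_meas.pow_const 2)))
  have ha2 : Measurable[m] fun ω => (-2 * mhat ω) / w ω ^ 2 :=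
    ((hmhat_meas.const_mul (-2)).div (hw_meas.pow_const 2))
  have ha3 : Measurable[m] fun ω => mhat ω ^ 2 / w ω ^ 2 :=
    ((hmhat_meas.pow_const 2).div (hw_meas.pow_const 2))
  have hw2lb : ∀ ω, c ^ 2 ≤ w ω ^ 2 := fun ω =>
    pow_le_pow_left₀ hc.le (hw_bdd ω).1 2
  have hinvbd : ∀ ω, |1 / w ω ^ 2| ≤ 1 / c ^ 2 := by
    intro ω
    rw [abs_of_nonneg (by positivity)]
    exact one_div_le_one_div_of_le (by positivity) (hw2lb ω)
  have hb1 : ∀ᵐ ω ∂μ, ‖(fun ω => 1 / w ω ^ 2) ω‖ ≤ 1 / c ^ 2 :=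
    Filter.Eventually.of_forall fun ω => by
      show |1 / w ω ^ 2| ≤ 1 / c ^ 2
      exact hinvbd ω
  have hb2 : ∀ᵐ ω ∂μ, ‖(fun ω => (-2 * mhat ω) / w ω ^ 2) ω‖ ≤ 2 * C / c ^ 2 := by
    refine Filter.Eventually.of_forall fun ω => ?_
    have h0 : (0:ℝ) ≤ C := (abs_nonneg _).trans (hmhat_bdd ω)
    rw [Real.norm_eq_abs, abs_div, abs_mul]
    rw [abs_of_nonneg (show (0:ℝ) ≤ w ω ^ 2 by positivity)]
    have : |(-2 : ℝ)| * |mhat ω| ≤ 2 * C := by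
      rw [abs_neg, abs_two]
      exact mul_le_mul_of_nonneg_left (hmhat_bdd ω) (by norm_num)
    calc |(-2:ℝ)| * |mhat ω| / w ω ^ 2 ≤ (2 * C) / w ω ^ 2 := by
          apply div_le_div_of_nonneg_right this (by positivity) |>.trans_eq rfl
      _ ≤ (2 * C) / c ^ 2 := by
          apply div_le_div_of_nonneg_left (by positivity) (by positivity) (hw2lb ω)
  have hb3 : ∀ᵐ ω ∂μ, ‖(fun ω => mhat ω ^ 2 / w ω ^ 2) ω‖ ≤ C ^ 2 / c ^ 2 := by
    refine Filter.Eventually.of_forall fun ω => ?_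
    rw [Real.norm_eq_abs, abs_div, abs_of_nonneg (show (0:ℝ) ≤ mhat ω ^ 2 by positivity),
      abs_of_nonneg (show (0:ℝ) ≤ w ω ^ 2 by positivity)]
    have h1 : mhat ω ^ 2 ≤ C ^ 2 := by
      have := sq_abs (mhat ω)
      nlinarith [hmhat_bdd ω, abs_nonneg (mhat ω)]
    calc mhat ω ^ 2 / w ω ^ 2 ≤ C ^ 2 / w ω ^ 2 :=
          div_le_div_of_nonneg_right h1 (by positivity) |>.trans_eq rfl
      _ ≤ C ^ 2 / c ^ 2 :=
          div_le_div_of_nonneg_left (by positivity) (by positivity) (hw2lb ω)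
  -- integrability of I * Y^k
  have hIY : Integrable (fun ω => I ω * Y ω) μ :=
    hYint.bdd_mul ((hIsm'.mono hm'0).aestronglyMeasurable)
      (Filter.Eventually.of_forall hIbd)
  have hIY2 : Integrable (fun ω => I ω * Y ω ^ 2) μ :=
    hY2int.bdd_mul ((hIsm'.mono hm'0).aestronglyMeasurable)
      (Filter.Eventually.of_forall hIbd)
  have hIint : Integrable I μ :=
    (integrable_const (1:ℝ)).bdd_mul ((hIsm'.mono hm'0).aestronglyMeasurable)
      (Filter.Eventually.of_forall hIbd) |>.congr
      (Filter.Eventually.of_forall fun ω => by simp)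
  -- decomposition of the integrand
  have hdecomp : (fun ω => I ω * (Y ω - mhat ω) ^ 2 / w ω ^ 2)
      = (fun ω => (1 / w ω ^ 2) * (I ω * Y ω ^ 2))
        + ((fun ω => (-2 * mhat ω) / w ω ^ 2) * fun ω => I ω * Y ω)
        + ((fun ω => mhat ω ^ 2 / w ω ^ 2) * I) := by
    funext ω
    by_cases hω : ω ∈ B <;>
      simp only [hIdef, Set.indicator, hω, if_pos, if_neg, Pi.add_apply, Pi.mul_apply] <;>
      simp [hω] <;> ring
  -- pull-out for each term
  have hp1 : μ[(fun ω => (1 / w ω ^ 2) * (I ω * Y ω ^ 2)) | m]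
      =ᵐ[μ] (fun ω => 1 / w ω ^ 2) * μ[(fun ω => I ω * Y ω ^ 2) | m] :=
    condExp_stronglyMeasurable_mul_of_bound hm ha1.stronglyMeasurable hIY2 _ hb1
  have hp2 : μ[((fun ω => (-2 * mhat ω) / w ω ^ 2) * fun ω => I ω * Y ω) | m]
      =ᵐ[μ] (fun ω => (-2 * mhat ω) / w ω ^ 2) * μ[(fun ω => I ω * Y ω) | m] :=
    condExp_stronglyMeasurable_mul_of_bound hm ha2.stronglyMeasurable hIY _ hb2
  have hp3 : μ[((fun ω => mhat ω ^ 2 / w ω ^ 2) * I) | m]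
      =ᵐ[μ] (fun ω => mhat ω ^ 2 / w ω ^ 2) * μ[I | m] :=
    condExp_stronglyMeasurable_mul_of_bound hm ha3.stronglyMeasurable hIint _ hb3
  -- integrability of each term (needed for condexp_add)
  have ht1 : Integrable (fun ω => (1 / w ω ^ 2) * (I ω * Y ω ^ 2)) μ :=
    hIY2.bdd_mul ((ha1.mono hm le_rfl).aestronglyMeasurable) hb1
  have ht2 : Integrable ((fun ω => (-2 * mhat ω) / w ω ^ 2) * fun ω => I ω * Y ω) μ :=
    hIY.bdd_mul ((ha2.mono hm le_rfl).aestronglyMeasurable) hb2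
  have ht3 : Integrable ((fun ω => mhat ω ^ 2 / w ω ^ 2) * I) μ :=
    hIint.bdd_mul ((ha3.mono hm le_rfl).aestronglyMeasurable) hb3
  have hadd : μ[(fun ω => (1 / w ω ^ 2) * (I ω * Y ω ^ 2))
        + ((fun ω => (-2 * mhat ω) / w ω ^ 2) * fun ω => I ω * Y ω)
        + ((fun ω => mhat ω ^ 2 / w ω ^ 2) * I) | m]
      =ᵐ[μ] μ[(fun ω => (1 / w ω ^ 2) * (I ω * Y ω ^ 2)) | m]
        + μ[((fun ω => (-2 * mhat ω) / w ω ^ 2) * fun ω => I ω * Y ω) | m]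
        + μ[((fun ω => mhat ω ^ 2 / w ω ^ 2) * I) | m] :=
    (condExp_add (ht1.add ht2) ht3 m).trans
      ((condExp_add ht1 ht2 m).add Filter.EventuallyEq.rfl)
  rw [hdecomp]
  refine hadd.trans ?_
  have hIw : μ[I | m] =ᵐ[μ] w := hw
  filter_upwards [hp1, hp2, hp3, key1, key2, hIw] with ω h1 h2 h3 k1 k2 kI
  simp only [Pi.add_apply, Pi.mul_apply] at h1 h2 h3 ⊢
  rw [h1, h2, h3, k1, k2, kI, hμY, hEY2]
  have hwne' := hwne ω
  field_simp
  ring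
end

section
/- Let (Ω, 𝓕, P) be a probability space with a filtration (𝓕_t)_{t=0}^T, and let (Ψ_t)_{t=1}^T be square-integrable real random variables with Ψ_t 𝓕_t-measurable, E[Ψ_t | 𝓕_{t−1}] = 0 almost surely, and exp(λΨ_t) integrable, where λ < 0 is a fixed real number. Write v_t = E[Ψ_t² | 𝓕_{t−1}]. Suppose for constants ε ≥ 0 and δ ≥ 0 that, almost surely, E[exp(λΨ_t) | 𝓕_{t−1}] ≤ exp( (λ²/2) v_t + δ ) for every t, and Σ_{t=1}^T v_t ≤ T(1 + ε) almost surely. Then P( Σ_{t=1}^T Ψ_t ≤ Tλ ) ≤ exp( −Tλ²/2 + Tλ²ε/2 + Tδ ). -/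
/-!
With `c_t = λ²/2 · v_t + δ`, the mgf hypothesis says `E[exp(λΨ_t − c_t) | 𝓕_{t−1}] ≤ 1`, so
`exp(Σ_{t ≤ n} (λΨ_t − c_t))` is a nonnegative supermartingale and has expectation at most `1`.
On the event `Σ v_t ≤ T(1 + ε)` we have `Σ c_t ≤ λ²T(1 + ε)/2 + Tδ`, which bounds `E[exp(λ S_T)]`;
the Chernoff bound `P(S_T ≤ Tλ) ≤ exp(−Tλ²) E[exp(λ S_T)]` for `λ < 0` concludes.
Everything is done with lower Lebesgue integrals, so no integrability of the products is needed.
-/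

open MeasureTheory ProbabilityTheory Filter Real

open scoped ENNReal

theorem lintegral_condLExp_mul {Ω : Type*} {m m0 : MeasurableSpace Ω} {μ : Measure[m0] Ω}
    (hm : m ≤ m0) [SigmaFinite (μ.trim hm)] {X F : Ω → ℝ≥0∞} (hX : Measurable X)
    (hF : Measurable[m] F) :
    ∫⁻ ω, μ⁻[X|m] ω * F ω ∂μ = ∫⁻ ω, X ω * F ω ∂μ := by
  have htrim : (μ.withDensity μ⁻[X|m]).trim hm = (μ.withDensity X).trim hm := by
    refine @Measure.ext _ m _ _ fun s hs => ?_
    rw [trim_measurableSet_eq hm hs, trim_measurableSet_eq hm hs, withDensity_apply _ (hm s hs),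
      withDensity_apply _ (hm s hs), setLIntegral_condLExp hm μ X hs]
  calc ∫⁻ ω, μ⁻[X|m] ω * F ω ∂μ = ∫⁻ ω, F ω ∂(μ.withDensity μ⁻[X|m]).trim hm := by
        rw [lintegral_trim hm hF, lintegral_withDensity_eq_lintegral_mul _
          (measurable_condLExp' m μ X) (hF.mono hm le_rfl)]
        rfl
    _ = ∫⁻ ω, X ω * F ω ∂μ := by
        rw [htrim, lintegral_trim hm hF, lintegral_withDensity_eq_lintegral_mul _ hX
          (hF.mono hm le_rfl)]
        rfl

theorem lintegral_ofReal_mul_le_of_condExp_le {Ω : Type*} {m m0 : MeasurableSpace Ω}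
    {μ : Measure[m0] Ω} (hm : m ≤ m0) [SigmaFinite (μ.trim hm)] {f g b : Ω → ℝ}
    (hf : Measurable[m] f) (hg : Measurable g) (hg_int : Integrable g μ) (hg_nonneg : 0 ≤ g)
    (hgb : μ[g|m] ≤ᵐ[μ] b) :
    ∫⁻ ω, ENNReal.ofReal (g ω) * ENNReal.ofReal (f ω) ∂μ
      ≤ ∫⁻ ω, ENNReal.ofReal (b ω) * ENNReal.ofReal (f ω) ∂μ := by
  rw [← lintegral_condLExp_mul hm hg.ennreal_ofReal hf.ennreal_ofReal]
  refine lintegral_mono_ae ?_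
  filter_upwards [condLExp_ofReal m hg_int (ae_of_all _ hg_nonneg), hgb] with ω hω hωb
  rw [hω]
  gcongr

theorem lintegral_exp_sum_sub_le_one {Ω : Type*} {m0 : MeasurableSpace Ω} {μ : Measure Ω}
    [IsProbabilityMeasure μ] (ℱ : Filtration ℕ m0) {Y c : ℕ → Ω → ℝ} (n : ℕ)
    (hY : ∀ t ∈ Finset.Icc 1 n, Measurable[ℱ t] (Y t))
    (hc : ∀ t ∈ Finset.Icc 1 n, Measurable[ℱ (t - 1)] (c t))
    (hY_int : ∀ t ∈ Finset.Icc 1 n, Integrable (fun ω => exp (Y t ω)) μ)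
    (hmgf : ∀ t ∈ Finset.Icc 1 n,
      μ[fun ω => exp (Y t ω) | ℱ (t - 1)] ≤ᵐ[μ] fun ω => exp (c t ω)) :
    ∫⁻ ω, ENNReal.ofReal (exp (∑ t ∈ Finset.Icc 1 n, (Y t ω - c t ω))) ∂μ ≤ 1 := by
  induction n with
  | zero => simp
  | succ n ih =>
    have hsub : Finset.Icc 1 n ⊆ Finset.Icc 1 (n + 1) := Finset.Icc_subset_Icc_right n.le_succ
    have hlast : n + 1 ∈ Finset.Icc 1 (n + 1) := by simp
    set Z : Ω → ℝ := fun ω => ∑ t ∈ Finset.Icc 1 n, (Y t ω - c t ω)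
    have hZ : Measurable[ℱ n] Z := by
      refine Finset.measurable_sum _ fun t ht => ?_
      have htn := (Finset.mem_Icc.1 ht).2
      exact ((hY t (hsub ht)).mono (ℱ.mono htn) le_rfl).sub
        ((hc t (hsub ht)).mono (ℱ.mono (by omega)) le_rfl)
    have hcn : Measurable[ℱ n] (c (n + 1)) := hc (n + 1) hlast
    calc ∫⁻ ω, ENNReal.ofReal (exp (∑ t ∈ Finset.Icc 1 (n + 1), (Y t ω - c t ω))) ∂μ
        = ∫⁻ ω, ENNReal.ofReal (exp (Y (n + 1) ω))
            * ENNReal.ofReal (exp (Z ω - c (n + 1) ω)) ∂μ := by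
          refine lintegral_congr fun ω => ?_
          rw [← ENNReal.ofReal_mul (exp_pos _).le, ← exp_add,
            Finset.sum_Icc_succ_top (by omega)]
          congr 2
          ring
      _ ≤ ∫⁻ ω, ENNReal.ofReal (exp (c (n + 1) ω))
            * ENNReal.ofReal (exp (Z ω - c (n + 1) ω)) ∂μ :=
          lintegral_ofReal_mul_le_of_condExp_le (ℱ.le n) (hZ.sub hcn).exp
            ((hY (n + 1) hlast).mono (ℱ.le _) le_rfl).exp (hY_int (n + 1) hlast)
            (fun ω => (exp_pos _).le) (hmgf (n + 1) hlast)
      _ = ∫⁻ ω, ENNReal.ofReal (exp (Z ω)) ∂μ := by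
          refine lintegral_congr fun ω => ?_
          rw [← ENNReal.ofReal_mul (exp_pos _).le, ← exp_add, add_sub_cancel]
      _ ≤ 1 := ih (fun t ht => hY t (hsub ht)) (fun t ht => hc t (hsub ht))
            (fun t ht => hY_int t (hsub ht)) (fun t ht => hmgf t (hsub ht))

theorem lintegral_exp_sum_le_of_sum_le {Ω : Type*} {m0 : MeasurableSpace Ω} {μ : Measure Ω}
    [IsProbabilityMeasure μ] (ℱ : Filtration ℕ m0) {Y c : ℕ → Ω → ℝ} (n : ℕ)
    (hY : ∀ t ∈ Finset.Icc 1 n, Measurable[ℱ t] (Y t))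
    (hc : ∀ t ∈ Finset.Icc 1 n, Measurable[ℱ (t - 1)] (c t))
    (hY_int : ∀ t ∈ Finset.Icc 1 n, Integrable (fun ω => exp (Y t ω)) μ)
    (hmgf : ∀ t ∈ Finset.Icc 1 n,
      μ[fun ω => exp (Y t ω) | ℱ (t - 1)] ≤ᵐ[μ] fun ω => exp (c t ω))
    {C : ℝ} (hC : ∀ᵐ ω ∂μ, ∑ t ∈ Finset.Icc 1 n, c t ω ≤ C) :
    ∫⁻ ω, ENNReal.ofReal (exp (∑ t ∈ Finset.Icc 1 n, Y t ω)) ∂μ ≤ ENNReal.ofReal (exp C) := by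
  calc ∫⁻ ω, ENNReal.ofReal (exp (∑ t ∈ Finset.Icc 1 n, Y t ω)) ∂μ
      ≤ ∫⁻ ω, ENNReal.ofReal (exp C)
          * ENNReal.ofReal (exp (∑ t ∈ Finset.Icc 1 n, (Y t ω - c t ω))) ∂μ := by
        refine lintegral_mono_ae ?_
        filter_upwards [hC] with ω hω
        rw [← ENNReal.ofReal_mul (exp_pos _).le, ← exp_add, Finset.sum_sub_distrib]
        gcongr
        linarith
    _ ≤ ENNReal.ofReal (exp C) * 1 := by
        rw [lintegral_const_mul' _ _ ENNReal.ofReal_ne_top]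
        gcongr
        exact lintegral_exp_sum_sub_le_one ℱ n hY hc hY_int hmgf
    _ = ENNReal.ofReal (exp C) := mul_one _

theorem measure_le_le_exp_mul_lintegral {Ω : Type*} {m0 : MeasurableSpace Ω} {μ : Measure Ω}
    {X : Ω → ℝ} (hX : AEMeasurable X μ) {t : ℝ} (ht : t ≤ 0) (a : ℝ) :
    μ {ω | X ω ≤ a} ≤ ENNReal.ofReal (exp (-t * a)) * ∫⁻ ω, ENNReal.ofReal (exp (t * X ω)) ∂μ := by
  have hpos : ENNReal.ofReal (exp (t * a)) ≠ 0 := by simp [exp_pos]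
  calc μ {ω | X ω ≤ a}
      ≤ μ {ω | ENNReal.ofReal (exp (t * a)) ≤ ENNReal.ofReal (exp (t * X ω))} :=
        measure_mono fun ω hω =>
          ENNReal.ofReal_le_ofReal (exp_le_exp.2 (mul_le_mul_of_nonpos_left hω ht))
    _ ≤ (∫⁻ ω, ENNReal.ofReal (exp (t * X ω)) ∂μ) / ENNReal.ofReal (exp (t * a)) :=
        meas_ge_le_lintegral_div (by fun_prop) hpos ENNReal.ofReal_ne_top
    _ = _ := by
        rw [div_eq_mul_inv, mul_comm, ← ENNReal.ofReal_inv_of_pos (exp_pos _), ← exp_neg, neg_mul]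

theorem stmt9_general {Ω : Type*} [m0 : MeasurableSpace Ω] (μ : Measure Ω) [IsProbabilityMeasure μ]
    (ℱ : Filtration ℕ m0) (T : ℕ)
    (Ψ : ℕ → Ω → ℝ) (lam : ℝ) (hlam : lam < 0)
    (hΨ_meas : ∀ t ∈ Finset.Icc 1 T, Measurable[ℱ t] (Ψ t))
    (hΨ_exp_int : ∀ t ∈ Finset.Icc 1 T, Integrable (fun ω => Real.exp (lam * Ψ t ω)) μ)
    (v : ℕ → Ω → ℝ) (hv : ∀ t ∈ Finset.Icc 1 T, v t =ᵐ[μ] μ[fun ω => (Ψ t ω) ^ 2 | ℱ (t - 1)])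
    (ε δ : ℝ)
    (hmgf : ∀ t ∈ Finset.Icc 1 T,
      μ[fun ω => Real.exp (lam * Ψ t ω) | ℱ (t - 1)]
        ≤ᵐ[μ] fun ω => Real.exp (lam ^ 2 / 2 * v t ω + δ))
    (hv_sum : ∀ᵐ ω ∂μ, ∑ t ∈ Finset.Icc 1 T, v t ω ≤ T * (1 + ε)) :
    μ {ω | ∑ t ∈ Finset.Icc 1 T, Ψ t ω ≤ T * lam}
      ≤ ENNReal.ofReal
        (Real.exp (-(T : ℝ) * lam ^ 2 / 2 + T * lam ^ 2 * ε / 2 + T * δ)) := by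
  -- Not `v`: that is only a.e. equal to the conditional variance, and may fail to be
  -- `ℱ (t - 1)`-measurable.
  set c : ℕ → Ω → ℝ := fun t ω => lam ^ 2 / 2 * μ[fun ω => (Ψ t ω) ^ 2 | ℱ (t - 1)] ω + δ
  have hmgf_c : ∀ t ∈ Finset.Icc 1 T,
      μ[fun ω => exp (lam * Ψ t ω) | ℱ (t - 1)] ≤ᵐ[μ] fun ω => exp (c t ω) := fun t ht => by
    filter_upwards [hmgf t ht, hv t ht] with ω hω hvω
    rwa [hvω] at hω
  have hc_sum : ∀ᵐ ω ∂μ, ∑ t ∈ Finset.Icc 1 T, c t ω ≤ lam ^ 2 / 2 * (T * (1 + ε)) + T * δ := by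
    filter_upwards [hv_sum, (Filter.eventually_all_finset _).2 hv] with ω hsum hvω
    simp only [c, Finset.sum_add_distrib, ← Finset.mul_sum, Finset.sum_const, Nat.card_Icc,
      add_tsub_cancel_right, nsmul_eq_mul, ← Finset.sum_congr rfl hvω]
    gcongr
  have hmgf_sum := lintegral_exp_sum_le_of_sum_le ℱ T (fun t ht => (hΨ_meas t ht).const_mul lam)
    (fun t _ => (stronglyMeasurable_condExp.measurable.const_mul _).add_const _) hΨ_exp_int
    hmgf_c hc_sum
  simp only [← Finset.mul_sum] at hmgf_sum
  calc μ {ω | ∑ t ∈ Finset.Icc 1 T, Ψ t ω ≤ T * lam}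
      ≤ ENNReal.ofReal (exp (-lam * (T * lam)))
          * ∫⁻ ω, ENNReal.ofReal (exp (lam * ∑ t ∈ Finset.Icc 1 T, Ψ t ω)) ∂μ :=
        measure_le_le_exp_mul_lintegral
          (Finset.measurable_sum _ fun t ht => (hΨ_meas t ht).mono (ℱ.le t) le_rfl).aemeasurable
          hlam.le _
    _ ≤ ENNReal.ofReal (exp (-lam * (T * lam)))
          * ENNReal.ofReal (exp (lam ^ 2 / 2 * (T * (1 + ε)) + T * δ)) :=
        mul_le_mul_right hmgf_sum _
    _ = _ := by
        rw [← ENNReal.ofReal_mul (exp_pos _).le, ← exp_add]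
        congr 2
        ring

/-- Chernoff-type concentration inequality for martingale difference sequences:
if `E[Ψ_t | 𝓕_{t−1}] = 0`, `E[exp(λΨ_t) | 𝓕_{t−1}] ≤ exp((λ²/2) v_t + δ)` a.s.
with `v_t = E[Ψ_t² | 𝓕_{t−1}]`, and `Σ_{t=1}^T v_t ≤ T(1+ε)` a.s., then for `λ < 0`,
`P(Σ_{t=1}^T Ψ_t ≤ Tλ) ≤ exp(−Tλ²/2 + Tλ²ε/2 + Tδ)`. -/
theorem stmt9 {Ω : Type*} [m0 : MeasurableSpace Ω] (μ : Measure Ω) [IsProbabilityMeasure μ]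
    (ℱ : Filtration ℕ m0) (T : ℕ)
    (Ψ : ℕ → Ω → ℝ) (lam : ℝ) (hlam : lam < 0)
    (hΨ_meas : ∀ t ∈ Finset.Icc 1 T, Measurable[ℱ t] (Ψ t))
    (hΨ_sq : ∀ t ∈ Finset.Icc 1 T, MemLp (Ψ t) 2 μ)
    (hΨ_mds : ∀ t ∈ Finset.Icc 1 T, μ[Ψ t | ℱ (t - 1)] =ᵐ[μ] fun _ => (0 : ℝ))
    (hΨ_exp_int : ∀ t ∈ Finset.Icc 1 T, Integrable (fun ω => Real.exp (lam * Ψ t ω)) μ)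
    (v : ℕ → Ω → ℝ) (hv : ∀ t ∈ Finset.Icc 1 T, v t =ᵐ[μ] μ[fun ω => (Ψ t ω) ^ 2 | ℱ (t - 1)])
    (ε δ : ℝ) (hε : 0 ≤ ε) (hδ : 0 ≤ δ)
    (hmgf : ∀ t ∈ Finset.Icc 1 T,
      μ[fun ω => Real.exp (lam * Ψ t ω) | ℱ (t - 1)]
        ≤ᵐ[μ] fun ω => Real.exp (lam ^ 2 / 2 * v t ω + δ))
    (hv_sum : ∀ᵐ ω ∂μ, ∑ t ∈ Finset.Icc 1 T, v t ω ≤ T * (1 + ε)) :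
    μ {ω | ∑ t ∈ Finset.Icc 1 T, Ψ t ω ≤ T * lam}
      ≤ ENNReal.ofReal
        (Real.exp (-(T : ℝ) * lam ^ 2 / 2 + T * lam ^ 2 * ε / 2 + T * δ)) :=
  stmt9_general (m0 := m0) μ ℱ T Ψ lam hlam hΨ_meas hΨ_exp_int v hv ε δ hmgf hv_sum
end

section
/- Let (Ω, 𝓕, P) be a probability space with a filtration (𝓕_t)_{t ≥ 0}. Let (Y_t)_{t ≥ 1} be identically distributed square-integrable real random variables with mean μ, let (B_t)_{t ≥ 1} be events, and suppose for each t: Y_t and 𝟙_{B_t} are 𝓕_t-measurable, σ(Y_t) is independent of the σ-algebra generated by 𝓕_{t−1} and B_t, and E[𝟙_{B_t} | 𝓕_{t−1}] ≥ c almost surely for a constant c > 0. Let N_t = Σ_{s=1}^t 𝟙_{B_s}. Then, almost surely, N_t → ∞ and (1/N_t) Σ_{s=1}^t 𝟙_{B_s} Y_s → μ as t → ∞. -/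
/-!
Put `Z_k = 𝟙_{B_k} (Y_k - μm)` and `W_k = 𝟙_{B_k} - P(B_k | 𝓕_{k-1})`. Independence of `Y_k`
from `𝓕_{k-1} ⊔ σ(B_k)` makes the `Z_k` orthogonal in `L²`; the `W_k` are bounded martingale
differences, hence orthogonal too. Both have bounded second moments, so Rajchman's strong law
applies: along the squares, `E[(S_{n²}/n²)²] = O(1/n²)` is summable, hence `Σ (S_{n²}/n²)² < ∞`
and `S_{n²}/n² → 0` a.s., and the blocks between consecutive squares are controlled the same way.
Thus `(1/t) Σ Z_k → 0` and `(1/t) Σ W_k → 0` a.s. As the conditional draw probabilities are at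
least `c`, the second limit gives `N_t ≥ c t / 2` eventually, and then
`(1/N_t) Σ 𝟙_{B_k} Y_k - μm = (Σ Z_k) / N_t → 0`.
-/

open MeasureTheory ProbabilityTheory Filter Topology

theorem ae_tendsto_zero_of_summable_integral_sq {Ω : Type*} [MeasurableSpace Ω] {μ : Measure Ω}
    {X : ℕ → Ω → ℝ} (hX : ∀ n, MemLp (X n) 2 μ)
    (hsum : Summable fun n => ∫ ω, X n ω ^ 2 ∂μ) :
    ∀ᵐ ω ∂μ, Tendsto (fun n => X n ω) atTop (𝓝 0) := by
  have hmeas : ∀ n, AEMeasurable (fun ω => ENNReal.ofReal (X n ω ^ 2)) μ := fun n =>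
    ((hX n).aestronglyMeasurable.aemeasurable.pow_const 2).ennreal_ofReal
  have hfin : ∫⁻ ω, ∑' n, ENNReal.ofReal (X n ω ^ 2) ∂μ ≠ ⊤ := by
    rw [lintegral_tsum hmeas]
    simp_rw [← ofReal_integral_eq_lintegral_ofReal (hX _).integrable_sq
      (ae_of_all _ fun _ => sq_nonneg _)]
    rw [← ENNReal.ofReal_tsum_of_nonneg (fun n => integral_nonneg fun _ => sq_nonneg _) hsum]
    exact ENNReal.ofReal_ne_top
  filter_upwards [ae_lt_top' (AEMeasurable.tsum hmeas) hfin] with ω hω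
  have hsq : Tendsto (fun n => X n ω ^ 2) atTop (𝓝 0) := by
    simpa [ENNReal.toReal_ofReal (sq_nonneg _)] using
      (ENNReal.summable_toReal hω.ne).tendsto_atTop_zero
  have habs : Tendsto (fun n => |X n ω|) atTop (𝓝 0) := by
    simpa [Real.sqrt_sq_eq_abs] using hsq.sqrt
  exact (tendsto_zero_iff_abs_tendsto_zero _).2 habs

theorem ae_tendsto_div_sq_of_integral_sq_le {Ω : Type*} [MeasurableSpace Ω] {μ : Measure Ω}
    {G : ℕ → Ω → ℝ} {C : ℝ} (hG : ∀ n, MemLp (G n) 2 μ)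
    (hC : ∀ n, 1 ≤ n → ∫ ω, G n ω ^ 2 ∂μ ≤ C * n ^ 2) :
    ∀ᵐ ω ∂μ, Tendsto (fun n => G n ω / n ^ 2) atTop (𝓝 0) := by
  refine ae_tendsto_zero_of_summable_integral_sq
    (fun n => by simpa only [div_eq_mul_inv] using (hG n).mul_const _) ?_
  have hmajor : Summable fun n : ℕ => C * (1 / (n : ℝ) ^ 2) :=
    (Real.summable_one_div_nat_pow.2 one_lt_two).mul_left C
  refine hmajor.of_nonneg_of_le (fun n => integral_nonneg fun _ => sq_nonneg _) fun n => ?_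
  rcases Nat.eq_zero_or_pos n with rfl | hn
  · simp -- both sides vanish, as `x / 0 = 0`
  have hn2 : (0 : ℝ) < (n : ℝ) ^ 2 := by positivity
  calc ∫ ω, (G n ω / n ^ 2) ^ 2 ∂μ = (∫ ω, G n ω ^ 2 ∂μ) / ((n : ℝ) ^ 2) ^ 2 := by
        simp_rw [div_pow]; exact integral_div _ _
    _ ≤ C * n ^ 2 / ((n : ℝ) ^ 2) ^ 2 := by gcongr; exact hC n hn
    _ = C * (1 / (n : ℝ) ^ 2) := by field_simp

theorem integral_sq_sum_of_orthogonal {Ω ι : Type*} [MeasurableSpace Ω] {μ : Measure Ω}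
    {Z : ι → Ω → ℝ} (hZ : ∀ i, MemLp (Z i) 2 μ)
    (horth : Pairwise fun i j => ∫ ω, Z i ω * Z j ω ∂μ = 0) (F : Finset ι) :
    ∫ ω, (∑ i ∈ F, Z i ω) ^ 2 ∂μ = ∑ i ∈ F, ∫ ω, Z i ω ^ 2 ∂μ := by
  have hint : ∀ i j, Integrable (fun ω => Z i ω * Z j ω) μ := fun i j =>
    (hZ i).integrable_mul (hZ j)
  simp_rw [sq, Finset.sum_mul_sum]
  rw [integral_finsetSum _ fun i _ => integrable_finsetSum _ fun j _ => hint i j]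
  refine Finset.sum_congr rfl fun i hi => ?_
  rw [integral_finsetSum _ fun j _ => hint i j]
  exact Finset.sum_eq_single_of_mem i hi fun j _ hji => horth hji.symm

theorem integral_sq_sum_abs_le {Ω ι : Type*} [MeasurableSpace Ω] {μ : Measure Ω}
    {Z : ι → Ω → ℝ} (hZ : ∀ i, MemLp (Z i) 2 μ) (F : Finset ι) :
    ∫ ω, (∑ i ∈ F, |Z i ω|) ^ 2 ∂μ ≤ F.card * ∑ i ∈ F, ∫ ω, Z i ω ^ 2 ∂μ := by
  have hsq : ∀ i, Integrable (fun ω => Z i ω ^ 2) μ := fun i => (hZ i).integrable_sq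
  rw [← integral_finsetSum _ fun i _ => hsq i, ← integral_const_mul]
  refine integral_mono ((memLp_finsetSum F fun i _ => (hZ i).abs).integrable_sq)
    ((integrable_finsetSum F fun i _ => hsq i).const_mul _) fun ω => ?_
  simpa only [sq_abs] using sq_sum_le_card_mul_sum_sq (s := F) (f := fun i => |Z i ω|)

theorem tendsto_div_of_tendsto_div_sq {S D : ℕ → ℝ}
    (hSD : ∀ n t, n ^ 2 ≤ t → t < (n + 1) ^ 2 → |S t| ≤ |S (n ^ 2)| + D n)
    (hS : Tendsto (fun n => S (n ^ 2) / n ^ 2) atTop (𝓝 0))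
    (hD : Tendsto (fun n => D n / n ^ 2) atTop (𝓝 0)) :
    Tendsto (fun t => S t / t) atTop (𝓝 0) := by
  have hsqrt : Tendsto Nat.sqrt atTop atTop :=
    tendsto_atTop_atTop.2 fun b => ⟨b * b, fun t ht => Nat.le_sqrt.2 ht⟩
  have hbound : Tendsto (fun t : ℕ => |S (t.sqrt ^ 2) / t.sqrt ^ 2| + D t.sqrt / t.sqrt ^ 2)
      atTop (𝓝 0) := by
    have h := (hS.abs.add hD).comp hsqrt
    rw [abs_zero, add_zero] at h
    exact h
  refine squeeze_zero_norm' ?_ hbound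
  filter_upwards [eventually_ge_atTop 1] with t ht
  have hn : (0 : ℝ) < t.sqrt ^ 2 := by have := Nat.sqrt_pos.2 ht; positivity
  have hnt : (t.sqrt : ℝ) ^ 2 ≤ t := by exact_mod_cast Nat.sqrt_le' t
  have hSt := hSD t.sqrt t (Nat.sqrt_le' t) (Nat.lt_succ_sqrt' t)
  rw [Real.norm_eq_abs, abs_div, Nat.abs_cast, abs_div, abs_of_pos hn, ← add_div]
  calc |S t| / t ≤ (|S (t.sqrt ^ 2)| + D t.sqrt) / t := by gcongr
    _ ≤ (|S (t.sqrt ^ 2)| + D t.sqrt) / t.sqrt ^ 2 :=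
        div_le_div_of_nonneg_left ((abs_nonneg _).trans hSt) hn hnt

theorem ae_tendsto_sum_range_div_of_orthogonal {Ω : Type*} [MeasurableSpace Ω] {μ : Measure Ω}
    {Z : ℕ → Ω → ℝ} {K : ℝ} (hZ : ∀ s, MemLp (Z s) 2 μ) (hK : ∀ s, ∫ ω, Z s ω ^ 2 ∂μ ≤ K)
    (horth : ∀ ⦃s u⦄, s < u → ∫ ω, Z s ω * Z u ω ∂μ = 0) :
    ∀ᵐ ω ∂μ, Tendsto (fun t => (∑ s ∈ Finset.range t, Z s ω) / t) atTop (𝓝 0) := by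
  have hK0 : 0 ≤ K := (integral_nonneg fun _ => sq_nonneg _).trans (hK 0)
  have hsumK : ∀ F : Finset ℕ, ∑ s ∈ F, ∫ ω, Z s ω ^ 2 ∂μ ≤ F.card * K := fun F => by
    simpa using Finset.sum_le_card_nsmul F _ K fun s _ => hK s
  have hpair : Pairwise fun s u => ∫ ω, Z s ω * Z u ω ∂μ = 0 := fun s u hsu =>
    hsu.lt_or_gt.elim (fun h => horth h) fun h => by simpa only [mul_comm] using horth h
  have hsq : ∀ᵐ ω ∂μ, Tendsto (fun n : ℕ => (∑ s ∈ Finset.range (n ^ 2), Z s ω) / n ^ 2)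
      atTop (𝓝 0) := by
    refine ae_tendsto_div_sq_of_integral_sq_le (C := K)
      (fun n => memLp_finsetSum _ fun s _ => hZ s) fun n _ => ?_
    rw [integral_sq_sum_of_orthogonal hZ hpair]
    exact (hsumK _).trans_eq (by simp [mul_comm])
  have hblock : ∀ᵐ ω ∂μ, Tendsto
      (fun n : ℕ => (∑ s ∈ Finset.Ico (n ^ 2) ((n + 1) ^ 2), |Z s ω|) / n ^ 2) atTop (𝓝 0) := by
    refine ae_tendsto_div_sq_of_integral_sq_le (C := 9 * K)
      (fun n => memLp_finsetSum _ fun s _ => (hZ s).abs) fun n hn => ?_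
    have hcard : ((Finset.Ico (n ^ 2) ((n + 1) ^ 2)).card : ℝ) = 2 * n + 1 := by
      rw [Nat.card_Ico]; push_cast [show (n + 1) ^ 2 - n ^ 2 = 2 * n + 1 by ring_nf; omega]; ring
    have hn1 : (1 : ℝ) ≤ n := by exact_mod_cast hn
    calc _ ≤ _ := integral_sq_sum_abs_le hZ _
      _ ≤ (2 * n + 1 : ℝ) * ((2 * n + 1) * K) := by
          rw [hcard]; gcongr; exact hcard ▸ hsumK _
      _ ≤ 9 * K * n ^ 2 := by
          nlinarith [mul_nonneg (mul_nonneg hK0 (sub_nonneg.2 hn1))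
            (by positivity : (0 : ℝ) ≤ 5 * n + 1)]
  filter_upwards [hsq, hblock] with ω hsqω hblockω
  refine tendsto_div_of_tendsto_div_sq (fun n t hnt htn => ?_) hsqω hblockω
  rw [← Finset.sum_range_add_sum_Ico _ hnt]
  calc _ ≤ |∑ s ∈ Finset.range (n ^ 2), Z s ω| + |∑ s ∈ Finset.Ico (n ^ 2) t, Z s ω| :=
        abs_add_le _ _
    _ ≤ _ := by
        gcongr
        exact (Finset.abs_sum_le_sum_abs _ _).trans <| Finset.sum_le_sum_of_subset_of_nonneg
          (Finset.Ico_subset_Ico_right htn.le) fun _ _ _ => abs_nonneg _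

theorem integral_mul_indicator_sub_integral_eq_zero {Ω : Type*} [m0 : MeasurableSpace Ω]
    {μ : Measure Ω} [IsProbabilityMeasure μ] {𝒢 : MeasurableSpace Ω} (h𝒢 : 𝒢 ≤ m0)
    {f X : Ω → ℝ} {A : Set Ω} (hf : Measurable[𝒢] f) (hA : MeasurableSet[m0] A)
    (hX : Integrable X μ)
    (hind : Indep (MeasurableSpace.comap X inferInstance)
      (𝒢 ⊔ MeasurableSpace.generateFrom {A}) μ) :
    ∫ ω, f ω * A.indicator (fun ω => X ω - ∫ x, X x ∂μ) ω ∂μ = 0 := by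
  set 𝒢A := 𝒢 ⊔ MeasurableSpace.generateFrom {A}
  have h𝒢A : 𝒢A ≤ m0 :=
    sup_le h𝒢 (MeasurableSpace.generateFrom_le fun _ h => Set.mem_singleton_iff.1 h ▸ hA)
  have hfA : Measurable[𝒢A] fun ω => f ω * A.indicator (fun _ => (1 : ℝ)) ω :=
    (hf.mono le_sup_left le_rfl).mul <| (measurable_const.indicator
      (MeasurableSpace.measurableSet_generateFrom (Set.mem_singleton A))).mono le_sup_right le_rfl
  have hXc : Measurable[MeasurableSpace.comap X inferInstance] fun ω => X ω - ∫ x, X x ∂μ :=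
    (comap_measurable X).sub_const _
  have hindep : IndepFun (fun ω => X ω - ∫ x, X x ∂μ)
      (fun ω => f ω * A.indicator (fun _ => (1 : ℝ)) ω) μ := by
    rw [IndepFun_iff_Indep]
    exact indep_of_indep_of_le_right (indep_of_indep_of_le_left hind hXc.comap_le) hfA.comap_le
  calc ∫ ω, f ω * A.indicator (fun ω => X ω - ∫ x, X x ∂μ) ω ∂μ
      = ∫ ω, (X ω - ∫ x, X x ∂μ) * (f ω * A.indicator (fun _ => (1 : ℝ)) ω) ∂μ := by
        congr 1; ext ω; by_cases hω : ω ∈ A <;> simp [hω, mul_comm]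
    _ = (∫ ω, X ω - ∫ x, X x ∂μ ∂μ) * ∫ ω, f ω * A.indicator (fun _ => (1 : ℝ)) ω ∂μ :=
        hindep.integral_fun_mul_eq_mul_integral (hX.sub (integrable_const _)).aestronglyMeasurable
          (hfA.mono h𝒢A le_rfl).aestronglyMeasurable
    _ = 0 := by simp [integral_sub hX (integrable_const _)]

theorem integral_mul_sub_condExp_eq_zero {Ω : Type*} {m m0 : MeasurableSpace Ω}
    {μ : Measure Ω} (hm : m ≤ m0) [SigmaFinite (μ.trim hm)] {f g : Ω → ℝ}
    (hf : StronglyMeasurable[m] f) (hg : Integrable g μ)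
    (hfg : Integrable (f * (g - μ[g | m])) μ) :
    ∫ ω, f ω * (g ω - μ[g | m] ω) ∂μ = 0 := by
  have hzero : μ[g - μ[g | m] | m] =ᵐ[μ] 0 := by
    filter_upwards [condExp_sub hg integrable_condExp m] with ω hω
    rw [hω, Pi.sub_apply, condExp_of_stronglyMeasurable hm stronglyMeasurable_condExp
      integrable_condExp, sub_self, Pi.zero_apply]
  calc ∫ ω, f ω * (g ω - μ[g | m] ω) ∂μ = ∫ ω, μ[f * (g - μ[g | m]) | m] ω ∂μ :=
        (integral_condExp hm).symm
    _ = ∫ ω, f ω * μ[g - μ[g | m] | m] ω ∂μ :=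
        integral_congr_ae <|
          condExp_mul_of_stronglyMeasurable_left hf hfg (hg.sub integrable_condExp)
    _ = 0 := by
        rw [integral_congr_ae (hzero.mono fun ω hω => by rw [hω, Pi.zero_apply, mul_zero])]
        simp

theorem ae_abs_indicator_sub_condExp_le_one {Ω : Type*} {m m0 : MeasurableSpace Ω}
    {μ : Measure Ω} [IsProbabilityMeasure μ] (hm : m ≤ m0) {A : Set Ω} (hA : MeasurableSet A) :
    ∀ᵐ ω ∂μ, |A.indicator (fun _ => (1 : ℝ)) ω - μ[A.indicator (fun _ => (1 : ℝ)) | m] ω| ≤ 1 := by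
  have hind : ∀ ω, 0 ≤ A.indicator (fun _ => (1 : ℝ)) ω ∧ A.indicator (fun _ => (1 : ℝ)) ω ≤ 1 :=
    fun ω => by by_cases hω : ω ∈ A <;> simp [hω]
  have h0 : 0 ≤ᵐ[μ] μ[A.indicator (fun _ => (1 : ℝ)) | m] :=
    condExp_nonneg (ae_of_all _ fun ω => (hind ω).1)
  have h1 : μ[A.indicator (fun _ => (1 : ℝ)) | m] ≤ᵐ[μ] fun _ => 1 := by
    simpa only [condExp_const hm] using condExp_mono (m := m) (μ := μ)
      ((integrable_const (1 : ℝ)).indicator hA) (integrable_const 1)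
      (ae_of_all _ fun ω => (hind ω).2)
  filter_upwards [h0, h1] with ω h0ω h1ω
  rw [Pi.zero_apply] at h0ω
  rw [abs_le]
  constructor <;> linarith [hind ω]

theorem integral_sq_indicator_sub_le {Ω : Type*} [MeasurableSpace Ω] {μ : Measure Ω}
    [IsFiniteMeasure μ] {X X' : Ω → ℝ} (hXX' : IdentDistrib X X' μ μ) (hX : MemLp X 2 μ)
    {A : Set Ω} (hA : MeasurableSet A) (a : ℝ) :
    ∫ ω, A.indicator (fun ω => X ω - a) ω ^ 2 ∂μ ≤ ∫ ω, (X' ω - a) ^ 2 ∂μ := by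
  have hXa : MemLp (fun ω => X ω - a) 2 μ := hX.sub (memLp_const a)
  calc ∫ ω, A.indicator (fun ω => X ω - a) ω ^ 2 ∂μ ≤ ∫ ω, (X ω - a) ^ 2 ∂μ :=
        integral_mono (hXa.indicator hA).integrable_sq hXa.integrable_sq fun ω => by
          by_cases hω : ω ∈ A <;> simp [hω, sq_nonneg]
    _ = ∫ ω, (X' ω - a) ^ 2 ∂μ :=
        (hXX'.comp (by fun_prop : Measurable fun x : ℝ => (x - a) ^ 2)).integral_eq

theorem Finset.sum_Icc_one_eq_sum_range {M : Type*} [AddCommMonoid M] (f : ℕ → M) (t : ℕ) :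
    ∑ s ∈ Finset.Icc 1 t, f s = ∑ k ∈ Finset.range t, f (k + 1) := by
  induction t with
  | zero => simp
  | succ t ih => rw [Finset.sum_Icc_succ_top (by omega), ih, Finset.sum_range_succ]

theorem eventually_half_mul_le_add_of_tendsto_div {w q : ℕ → ℝ} {c : ℝ} (hc : 0 < c)
    (hq : ∀ t, c * t ≤ q t) (hw : Tendsto (fun t => w t / t) atTop (𝓝 0)) :
    ∀ᶠ t in atTop, c / 2 * t ≤ w t + q t := by
  filter_upwards [hw.eventually (Ioi_mem_nhds (neg_lt_zero.2 (half_pos hc))),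
    eventually_gt_atTop 0] with t hwt ht
  have ht' : (0 : ℝ) < t := Nat.cast_pos.2 ht
  have : -(c / 2) * t < w t := (lt_div_iff₀ ht').1 hwt
  linarith [hq t]

theorem tendsto_div_of_linear_lower_bound {z N : ℕ → ℝ} {a : ℝ} (ha : 0 < a)
    (hN : ∀ᶠ t in atTop, a * t ≤ N t) (hz : Tendsto (fun t => z t / t) atTop (𝓝 0)) :
    Tendsto (fun t => z t / N t) atTop (𝓝 0) := by
  have hbound : Tendsto (fun t => |z t / t| / a) atTop (𝓝 0) := by
    simpa using hz.abs.div_const a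
  refine squeeze_zero_norm' ?_ hbound
  filter_upwards [hN, eventually_gt_atTop 0] with t hNt ht
  have ht' : (0 : ℝ) < t := Nat.cast_pos.2 ht
  have hNt' : 0 < N t := (by positivity : 0 < a * t).trans_le hNt
  rw [Real.norm_eq_abs, abs_div, abs_div, Nat.abs_cast, abs_of_pos hNt', div_div]
  gcongr
  linarith

theorem tendsto_sum_atTop_and_ratio_of_tendsto_avg {a p r : ℕ → ℝ} {c m : ℝ} (hc : 0 < c)
    (hp : ∀ k, c ≤ p k)
    (hap : Tendsto (fun t => (∑ k ∈ Finset.range t, (a k - p k)) / t) atTop (𝓝 0))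
    (hra : Tendsto (fun t => (∑ k ∈ Finset.range t, (r k - m * a k)) / t) atTop (𝓝 0)) :
    Tendsto (fun t => ∑ k ∈ Finset.range t, a k) atTop atTop ∧
      Tendsto (fun t => 1 / (∑ k ∈ Finset.range t, a k) * ∑ k ∈ Finset.range t, r k)
        atTop (𝓝 m) := by
  have hq : ∀ t : ℕ, c * t ≤ ∑ k ∈ Finset.range t, p k := fun t => by
    simpa [mul_comm] using Finset.card_nsmul_le_sum (Finset.range t) p c fun k _ => hp k
  have hlin : ∀ᶠ t in atTop, c / 2 * t ≤ ∑ k ∈ Finset.range t, a k := by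
    simpa only [← Finset.sum_add_distrib, sub_add_cancel] using
      eventually_half_mul_le_add_of_tendsto_div hc hq hap
  refine ⟨tendsto_atTop_mono' _ hlin
    (tendsto_natCast_atTop_atTop.const_mul_atTop (half_pos hc)), ?_⟩
  have hm := (tendsto_div_of_linear_lower_bound (half_pos hc) hlin hra).const_add m
  rw [add_zero] at hm
  refine hm.congr' ?_
  filter_upwards [hlin, eventually_gt_atTop 0] with t hlint ht
  have hpos : 0 < ∑ k ∈ Finset.range t, a k := (by positivity : 0 < c / 2 * t).trans_le hlint
  rw [Finset.sum_sub_distrib, ← Finset.mul_sum]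
  field_simp
  ring

section Bandit

variable {Ω : Type*} [m0 : MeasurableSpace Ω] {μ : Measure Ω} [IsProbabilityMeasure μ]
  {ℱ : Filtration ℕ m0} {Y : ℕ → Ω → ℝ} {B : ℕ → Set Ω}

theorem ae_tendsto_avg_centered_rewards {μm : ℝ}
    (h_ident : ∀ t, 1 ≤ t → Measure.map (Y t) μ = Measure.map (Y 1) μ)
    (h_sq : ∀ t, 1 ≤ t → MemLp (Y t) 2 μ)
    (h_mean : ∀ t, 1 ≤ t → ∫ ω, Y t ω ∂μ = μm)
    (hY_meas : ∀ t, 1 ≤ t → Measurable[ℱ t] (Y t))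
    (hB_meas : ∀ t, 1 ≤ t → MeasurableSet[ℱ t] (B t))
    (h_indep : ∀ t, 1 ≤ t →
      Indep (MeasurableSpace.comap (Y t) inferInstance)
        (ℱ (t - 1) ⊔ MeasurableSpace.generateFrom {B t}) μ) :
    ∀ᵐ ω ∂μ, Tendsto (fun t => (∑ k ∈ Finset.range t,
      (B (k + 1)).indicator (fun ω => Y (k + 1) ω - μm) ω) / t) atTop (𝓝 0) := by
  have hBm : ∀ k, MeasurableSet (B (k + 1)) := fun k => ℱ.le _ _ (hB_meas _ k.succ_pos)
  have hYm : ∀ t, 1 ≤ t → Measurable (Y t) := fun t ht => (hY_meas t ht).mono (ℱ.le t) le_rfl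
  have hident : ∀ k, IdentDistrib (Y (k + 1)) (Y 1) μ μ := fun k =>
    ⟨(hYm _ k.succ_pos).aemeasurable, (hYm 1 le_rfl).aemeasurable, h_ident _ k.succ_pos⟩
  refine ae_tendsto_sum_range_div_of_orthogonal (K := ∫ ω, (Y 1 ω - μm) ^ 2 ∂μ)
    (fun k => ((h_sq _ k.succ_pos).sub (memLp_const μm)).indicator (hBm k))
    (fun k => integral_sq_indicator_sub_le (hident k) (h_sq _ k.succ_pos) (hBm k) μm)
    fun j k hjk => ?_
  have hZj : Measurable[ℱ k] ((B (j + 1)).indicator fun ω => Y (j + 1) ω - μm) :=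
    (((hY_meas _ j.succ_pos).sub_const μm).indicator (hB_meas _ j.succ_pos)).mono
      (ℱ.mono hjk) le_rfl
  have h := integral_mul_indicator_sub_integral_eq_zero (ℱ.le k) hZj (hBm k)
    ((h_sq _ k.succ_pos).integrable one_le_two) (by simpa using h_indep (k + 1) k.succ_pos)
  rwa [h_mean _ k.succ_pos] at h

theorem ae_tendsto_avg_draw_innovations
    (hB_meas : ∀ t, 1 ≤ t → MeasurableSet[ℱ t] (B t)) :
    ∀ᵐ ω ∂μ, Tendsto (fun t => (∑ k ∈ Finset.range t, ((B (k + 1)).indicator (fun _ => (1 : ℝ)) ω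
      - μ[(B (k + 1)).indicator (fun _ => (1 : ℝ)) | ℱ k] ω)) / t) atTop (𝓝 0) := by
  set W : ℕ → Ω → ℝ := fun k ω => (B (k + 1)).indicator (fun _ => (1 : ℝ)) ω
      - μ[(B (k + 1)).indicator (fun _ => (1 : ℝ)) | ℱ k] ω
  have hBm : ∀ k, MeasurableSet (B (k + 1)) := fun k => ℱ.le _ _ (hB_meas _ k.succ_pos)
  have hbdd : ∀ k, ∀ᵐ ω ∂μ, |W k ω| ≤ 1 := fun k =>
    ae_abs_indicator_sub_condExp_le_one (ℱ.le k) (hBm k)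
  have hsm : ∀ k, StronglyMeasurable[ℱ (k + 1)] (W k) := fun k =>
    (stronglyMeasurable_const.indicator (hB_meas _ k.succ_pos)).sub
      (stronglyMeasurable_condExp.mono (ℱ.mono k.le_succ))
  have hL2 : ∀ k, MemLp (W k) 2 μ := fun k =>
    MemLp.of_bound ((hsm k).mono (ℱ.le _)).aestronglyMeasurable 1 (hbdd k)
  refine ae_tendsto_sum_range_div_of_orthogonal (K := 1) hL2 (fun k => ?_) fun j k hjk => ?_
  · calc ∫ ω, W k ω ^ 2 ∂μ ≤ ∫ _, 1 ∂μ :=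
          integral_mono_ae (hL2 k).integrable_sq (integrable_const 1)
            ((hbdd k).mono fun ω h => (sq_le_one_iff_abs_le_one _).2 h)
      _ = 1 := by simp
  · exact integral_mul_sub_condExp_eq_zero (ℱ.le k) ((hsm j).mono (ℱ.mono hjk))
      ((integrable_const 1).indicator (hBm k)) ((hL2 j).integrable_mul (hL2 k))

end Bandit

/-- Strong consistency of the adaptively sampled arm-wise sample mean (Lemma 1):
if the rewards `Y_t` are identically distributed with mean `μm`, square-integrable,
`σ(Y_t)` is independent of the σ-algebra generated by `𝓕_{t−1}` and the draw `B_t`,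
and the conditional draw probability is bounded below by `c > 0`, then almost surely
`N_t = Σ_{s=1}^t 𝟙_{B_s} → ∞` and `(1/N_t) Σ_{s=1}^t 𝟙_{B_s} Y_s → μm`. -/
theorem stmt16 {Ω : Type*} [m0 : MeasurableSpace Ω] (μ : Measure Ω) [IsProbabilityMeasure μ]
    (ℱ : Filtration ℕ m0) (Y : ℕ → Ω → ℝ) (B : ℕ → Set Ω)
    (μm : ℝ)
    (h_ident : ∀ t, 1 ≤ t → Measure.map (Y t) μ = Measure.map (Y 1) μ)
    (h_sq : ∀ t, 1 ≤ t → MemLp (Y t) 2 μ)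
    (h_mean : ∀ t, 1 ≤ t → ∫ ω, Y t ω ∂μ = μm)
    (hY_meas : ∀ t, 1 ≤ t → Measurable[ℱ t] (Y t))
    (hB_meas : ∀ t, 1 ≤ t → MeasurableSet[ℱ t] (B t))
    (h_indep : ∀ t, 1 ≤ t →
      Indep (MeasurableSpace.comap (Y t) inferInstance)
        (ℱ (t - 1) ⊔ MeasurableSpace.generateFrom {B t}) μ)
    (c : ℝ) (hc : 0 < c)
    (hcond : ∀ t, 1 ≤ t →
      ∀ᵐ ω ∂μ, c ≤ (μ[(B t).indicator (fun _ => (1 : ℝ)) | ℱ (t - 1)]) ω)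
    (N : ℕ → Ω → ℝ)
    (hN : ∀ t ω, N t ω = ∑ s ∈ Finset.Icc 1 t, (B s).indicator (fun _ => (1 : ℝ)) ω) :
    ∀ᵐ ω ∂μ,
      Tendsto (fun t => N t ω) atTop atTop ∧
      Tendsto (fun t => (1 / N t ω) * ∑ s ∈ Finset.Icc 1 t, (B s).indicator (Y s) ω)
        atTop (nhds μm) := by
  have hZ := ae_tendsto_avg_centered_rewards h_ident h_sq h_mean hY_meas hB_meas h_indep
  have hW := ae_tendsto_avg_draw_innovations (μ := μ) hB_meas
  have hp : ∀ᵐ ω ∂μ, ∀ k, c ≤ μ[(B (k + 1)).indicator (fun _ => (1 : ℝ)) | ℱ k] ω :=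
    ae_all_iff.2 fun k => by simpa using hcond (k + 1) k.succ_pos
  filter_upwards [hZ, hW, hp] with ω hZω hWω hpω
  have hsplit : ∀ k, (B (k + 1)).indicator (fun ω => Y (k + 1) ω - μm) ω
      = (B (k + 1)).indicator (Y (k + 1)) ω - μm * (B (k + 1)).indicator (fun _ => (1 : ℝ)) ω :=
    fun k => by by_cases hω : ω ∈ B (k + 1) <;> simp [hω]
  simp only [hsplit] at hZω
  simpa only [hN, Finset.sum_Icc_one_eq_sum_range] using
    tendsto_sum_atTop_and_ratio_of_tendsto_avg hc hpω hWω hZω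
end
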